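/- arXiv:1612.07615 — 3 statements merged into one kernel-verified Lean document; each statement's English description precedes it below -/
import Mathlib

section
/- For every natural number d ≥ 2, the polynomial (x²-1) divides the polynomial (d+1)T_d(x) - U_d(x) in ℝ[x], with quotient Σ_{i=1}^{⌊d/2⌋} 2i · C(d+1, 2i+1) · (x²-1)^{i-1} · x^{d-2i}. -/
open Polynomial


noncomputable def chebA (d : ℕ) : ℝ[X] :=
  ∑ k ∈ Finset.range (d + 1), Polynomial.C ((d.choose (2 * k)) : ℝ) * (X ^ 2 - 1) ^ k * X ^ (d - 2 * k)

noncomputable def chebB (d : ℕ) : ℝ[X] :=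
  ∑ k ∈ Finset.range (d + 1), Polynomial.C ((d.choose (2 * k + 1)) : ℝ) * (X ^ 2 - 1) ^ k * X ^ (d - 1 - 2 * k)

lemma stepA (d : ℕ) : chebA (d + 1) = X * chebA d + (X ^ 2 - 1) * chebB d := by
  unfold chebA chebB
  rw [Finset.sum_range_succ' (fun k => Polynomial.C (((d+1).choose (2 * k)) : ℝ) * (X ^ 2 - 1) ^ k * X ^ (d + 1 - 2 * k))]
  have pascal : ∀ j : ℕ, (d+1).choose (2 * (j+1)) = d.choose (2*j+1) + d.choose (2*j+2) := by
    intro j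
    have : 2 * (j+1) = (2*j+1) + 1 := by ring
    rw [this, Nat.choose_succ_succ']
  have e1 : ∀ j : ℕ, Polynomial.C (((d+1).choose (2 * (j+1))) : ℝ) * (X ^ 2 - 1) ^ (j+1) * X ^ (d + 1 - 2 * (j+1))
      = Polynomial.C ((d.choose (2*(j+1))) : ℝ) * (X ^ 2 - 1) ^ (j+1) * X ^ (d + 1 - 2 * (j+1))
        + (X^2-1) * (Polynomial.C ((d.choose (2*j+1)) : ℝ) * (X ^ 2 - 1) ^ j * X ^ (d - 1 - 2*j)) := by
    intro j
    have hexp : d + 1 - 2 * (j+1) = d - 1 - 2*j := by omega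
    have h2 : 2*(j+1) = 2*j+2 := by ring
    rw [pascal j, hexp, h2]
    push_cast
    rw [map_add]
    ring
  rw [Finset.sum_congr rfl (fun j _ => e1 j)]
  rw [Finset.sum_add_distrib]
  -- now: (Σ_j A-part(j+1)) + (X²-1)-part + first term = goal
  have eX : ∀ k : ℕ, k ∈ Finset.range (d+1) → Polynomial.C ((d.choose (2 * k)) : ℝ) * (X ^ 2 - 1) ^ k * X ^ (d + 1 - 2 * k)
      = X * (Polynomial.C ((d.choose (2 * k)) : ℝ) * (X ^ 2 - 1) ^ k * X ^ (d - 2 * k)) := by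
    intro k _
    by_cases h : 2 * k ≤ d
    · have : d + 1 - 2*k = (d - 2*k) + 1 := by omega
      rw [this]; ring
    · rw [Nat.choose_eq_zero_of_lt (by omega)]
      simp
  have hsum : (∑ j ∈ Finset.range (d+1), Polynomial.C ((d.choose (2*(j+1))) : ℝ) * (X ^ 2 - 1) ^ (j+1) * X ^ (d + 1 - 2 * (j+1)))
      + Polynomial.C (((d+1).choose (2 * 0)) : ℝ) * (X ^ 2 - 1) ^ 0 * X ^ (d + 1 - 2 * 0)
      = ∑ k ∈ Finset.range (d+2), Polynomial.C ((d.choose (2*k)) : ℝ) * (X ^ 2 - 1) ^ k * X ^ (d + 1 - 2 * k) := by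
    rw [Finset.sum_range_succ' (fun k => Polynomial.C ((d.choose (2 * k)) : ℝ) * (X ^ 2 - 1) ^ k * X ^ (d + 1 - 2 * k))]
    simp
  have hdrop : ∑ k ∈ Finset.range (d+2), Polynomial.C ((d.choose (2*k)) : ℝ) * (X ^ 2 - 1) ^ k * X ^ (d + 1 - 2 * k)
      = ∑ k ∈ Finset.range (d+1), Polynomial.C ((d.choose (2*k)) : ℝ) * (X ^ 2 - 1) ^ k * X ^ (d + 1 - 2 * k) := by
    rw [Finset.sum_range_succ]
    rw [Nat.choose_eq_zero_of_lt (by omega)]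
    simp
  rw [Finset.mul_sum, Finset.mul_sum, ← Finset.sum_congr rfl eX, ← hdrop, ← hsum]
  ring

lemma stepB (d : ℕ) : chebB (d + 1) = chebA d + X * chebB d := by
  unfold chebA chebB
  have e1 : ∀ k : ℕ, k ∈ Finset.range (d+2) →
      Polynomial.C (((d+1).choose (2 * k + 1)) : ℝ) * (X ^ 2 - 1) ^ k * X ^ (d + 1 - 1 - 2 * k)
      = Polynomial.C ((d.choose (2*k)) : ℝ) * (X ^ 2 - 1) ^ k * X ^ (d - 2 * k)
        + Polynomial.C ((d.choose (2*k+1)) : ℝ) * (X ^ 2 - 1) ^ k * X ^ (d - 2*k) := by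
    intro k _
    have : (d+1).choose (2*k+1) = d.choose (2*k) + d.choose (2*k+1) := Nat.choose_succ_succ' d (2*k)
    rw [this]
    have hexp : d + 1 - 1 - 2*k = d - 2*k := by omega
    rw [hexp]
    push_cast
    rw [map_add]
    ring
  rw [Finset.sum_congr rfl e1, Finset.sum_add_distrib]
  have h1 : ∑ k ∈ Finset.range (d+2), Polynomial.C ((d.choose (2*k)) : ℝ) * (X ^ 2 - 1) ^ k * X ^ (d - 2*k)
      = ∑ k ∈ Finset.range (d+1), Polynomial.C ((d.choose (2*k)) : ℝ) * (X ^ 2 - 1) ^ k * X ^ (d - 2*k) := by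
    rw [Finset.sum_range_succ, Nat.choose_eq_zero_of_lt (by omega)]
    simp
  have h2 : ∑ k ∈ Finset.range (d+2), Polynomial.C ((d.choose (2*k+1)) : ℝ) * (X ^ 2 - 1) ^ k * X ^ (d - 2*k)
      = X * ∑ k ∈ Finset.range (d+1), Polynomial.C ((d.choose (2*k+1)) : ℝ) * (X ^ 2 - 1) ^ k * X ^ (d - 1 - 2*k) := by
    rw [Finset.sum_range_succ, Nat.choose_eq_zero_of_lt (by omega), Finset.mul_sum]
    simp only [Nat.cast_zero, map_zero, zero_mul, mul_zero, add_zero]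
    refine Finset.sum_congr rfl fun k _ => ?_
    by_cases h : 2 * k + 1 ≤ d
    · have : d - 2*k = (d - 1 - 2*k) + 1 := by omega
      rw [this]; ring
    · rw [Nat.choose_eq_zero_of_lt (by omega)]
      simp
  rw [h1, h2]

lemma TU_eq (d : ℕ) : Polynomial.Chebyshev.T ℝ (d : ℤ) = chebA d ∧
    Polynomial.Chebyshev.U ℝ ((d : ℤ) - 1) = chebB d := by
  induction d with
  | zero => constructor <;> simp [chebA, chebB, Polynomial.Chebyshev.T_zero]
  | succ d ih =>
    obtain ⟨hT, hU⟩ := ih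
    have hcast : ((d + 1 : ℕ) : ℤ) = ((d : ℤ) - 1) + 2 := by push_cast; ring
    constructor
    · rw [hcast, Polynomial.Chebyshev.T_eq_X_mul_T_sub_pol_U]
      have : ((d : ℤ) - 1) + 1 = (d : ℤ) := by ring
      rw [this, hT, hU, stepA]
      ring
    · have hcast2 : ((d + 1 : ℕ) : ℤ) - 1 = ((d : ℤ) - 1) + 1 := by push_cast; ring
      rw [hcast2, Polynomial.Chebyshev.U_eq_X_mul_U_add_T]
      have : ((d : ℤ) - 1) + 1 = (d : ℤ) := by ring
      rw [this, hT, hU, stepB]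
      ring

/-- (X²−1) divides (d+1)T_d − U_d in ℝ[X], with quotient
Σ_{i=1}^{⌊d/2⌋} 2i C(d+1, 2i+1) (X²−1)^{i−1} X^{d−2i}. -/
theorem chebyshev_combination_div (d : ℕ) (hd : 2 ≤ d) :
    (X ^ 2 - 1 : ℝ[X]) ∣
        ((d : ℝ[X]) + 1) * Polynomial.Chebyshev.T ℝ (d : ℤ) -
          Polynomial.Chebyshev.U ℝ (d : ℤ) ∧
      ((d : ℝ[X]) + 1) * Polynomial.Chebyshev.T ℝ (d : ℤ) -
          Polynomial.Chebyshev.U ℝ (d : ℤ) =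
        (X ^ 2 - 1) *
          ∑ i ∈ Finset.Icc 1 (d / 2),
            Polynomial.C (2 * i * (d + 1).choose (2 * i + 1) : ℝ) *
              (X ^ 2 - 1) ^ (i - 1) * X ^ (d - 2 * i) := by
  have hT : Polynomial.Chebyshev.T ℝ (d : ℤ) = chebA d := (TU_eq d).1
  have hU : Polynomial.Chebyshev.U ℝ (d : ℤ) = chebB (d + 1) := by
    have := (TU_eq (d + 1)).2
    have hc : ((d + 1 : ℕ) : ℤ) - 1 = (d : ℤ) := by push_cast; ring
    rwa [hc] at this
  have key : ((d : ℝ[X]) + 1) * Polynomial.Chebyshev.T ℝ (d : ℤ) -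
      Polynomial.Chebyshev.U ℝ (d : ℤ)
      = ∑ k ∈ Finset.range (d + 2),
          Polynomial.C ((2 * k * (d + 1).choose (2 * k + 1) : ℕ) : ℝ) *
            (X ^ 2 - 1) ^ k * X ^ (d - 2 * k) := by
    rw [hT, hU]
    unfold chebA chebB
    have hA : ((d : ℝ[X]) + 1) * ∑ k ∈ Finset.range (d + 1),
        Polynomial.C ((d.choose (2 * k)) : ℝ) * (X ^ 2 - 1) ^ k * X ^ (d - 2 * k)
        = ∑ k ∈ Finset.range (d + 2),
          ((d : ℝ[X]) + 1) * (Polynomial.C ((d.choose (2 * k)) : ℝ) * (X ^ 2 - 1) ^ k * X ^ (d - 2 * k)) := by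
      rw [Finset.mul_sum]
      conv_rhs => rw [Finset.sum_range_succ]
      rw [Nat.choose_eq_zero_of_lt (show d < 2 * (d + 1) by omega)]
      simp
    rw [hA, ← Finset.sum_sub_distrib]
    refine Finset.sum_congr rfl fun k _ => ?_
    have hexp : d + 1 - 1 - 2 * k = d - 2 * k := by omega
    rw [hexp]
    have hcoef : ((d : ℝ) + 1) * (d.choose (2 * k) : ℝ) - ((d + 1).choose (2 * k + 1) : ℝ)
        = ((2 * k * (d + 1).choose (2 * k + 1) : ℕ) : ℝ) := by
      have h := Nat.add_one_mul_choose_eq d (2 * k)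
      have h' : (d + 1) * d.choose (2 * k) = (d + 1).choose (2 * k + 1) * (2 * k + 1) := h
      have : ((d : ℝ) + 1) * (d.choose (2 * k) : ℝ)
          = ((d + 1).choose (2 * k + 1) : ℝ) * (2 * (k : ℝ) + 1) := by
        exact_mod_cast congrArg (Nat.cast : ℕ → ℝ) h'
      rw [this]
      push_cast
      ring
    have hd1 : ((d : ℝ[X]) + 1) = Polynomial.C ((d : ℝ) + 1) := by simp
    rw [hd1, ← hcoef, map_sub, map_mul]
    ring
  have keq : ((d : ℝ[X]) + 1) * Polynomial.Chebyshev.T ℝ (d : ℤ) -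
      Polynomial.Chebyshev.U ℝ (d : ℤ) =
      (X ^ 2 - 1) *
        ∑ i ∈ Finset.Icc 1 (d / 2),
          Polynomial.C (2 * i * (d + 1).choose (2 * i + 1) : ℝ) *
            (X ^ 2 - 1) ^ (i - 1) * X ^ (d - 2 * i) := by
    rw [key]
    have hsub : Finset.Icc 1 (d / 2) ⊆ Finset.range (d + 2) := by
      intro i hi
      simp only [Finset.mem_Icc] at hi
      simp only [Finset.mem_range]
      omega
    rw [Finset.mul_sum]
    rw [← Finset.sum_subset hsub]
    · refine Finset.sum_congr rfl fun i hi => ?_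
      simp only [Finset.mem_Icc] at hi
      obtain ⟨h1, _⟩ := hi
      have : (X ^ 2 - 1 : ℝ[X]) ^ i = (X ^ 2 - 1) * (X ^ 2 - 1) ^ (i - 1) := by
        conv_lhs => rw [show i = (i - 1) + 1 by omega]
        ring
      rw [this]
      push_cast
      ring
    · intro i hi hni
      simp only [Finset.mem_range] at hi
      simp only [Finset.mem_Icc, not_and, not_le] at hni
      rcases Nat.eq_zero_or_pos i with h0 | h1
      · subst h0; simp
      · have : d + 1 < 2 * i + 1 := by omega
        rw [Nat.choose_eq_zero_of_lt this]
        simp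
  exact ⟨⟨_, keq⟩, keq⟩
end

section
/- For every natural number d ≥ 2 and θ ∈ (0,π), F_d(θ) = (3/(d(d²-1))) · Σ_{i=1}^{⌊d/2⌋} 2i · C(d+1, 2i+1) · (-1)^{i-1} · (sin²θ)^{i-1} · (cos θ)^{d-2i}; in particular F_d(θ) is a polynomial in cos θ and sin²θ. -/
/-! With `s = sin θ`, `c = cos θ` and `z = c + s i = e^{iθ}`, the quotient rule gives
`F_d(θ) · d(d² - 1)/3 = -(d s cos dθ - c sin dθ) / s³`, and the numerator is
`Im ((d + 1) s i z^d - z^{d+1})`. By the differentiated binomial theorem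
`∑_k k C(n,k) a^k b^(n-k) = n a (a + b)^(n-1)` with `a = s i`, `b = c`, this is
`Im ∑_k (k - 1) C(d+1,k) (s i)^k c^(d+1-k)`. Only odd `k = 2i + 1` contribute, with weight
`k - 1 = 2i` and sign `(-1)^i`; dividing by `s³` leaves `(s²)^(i-1)`. -/

open Real

noncomputable def F (d : ℕ) (θ : ℝ) : ℝ :=
  -(3 / ((d : ℝ) * ((d : ℝ) ^ 2 - 1))) * (1 / Real.sin θ) *
    deriv (fun t : ℝ => Real.sin (d * t) / Real.sin t) θ

open Finset
open Complex (I)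

theorem sum_range_mul_pow_mul_pow_mul_choose {R : Type*} [CommSemiring R] (a b : R) (n : ℕ) :
    ∑ k ∈ range (n + 2), (k : R) * a ^ k * b ^ (n + 1 - k) * (n + 1).choose k =
      (n + 1) * a * (a + b) ^ n := by
  rw [sum_range_succ', add_pow, mul_sum]
  simp only [Nat.cast_zero, zero_mul, add_zero, Nat.cast_add_one, Nat.add_sub_add_right]
  refine sum_congr rfl fun k _ => ?_
  have h := congrArg (Nat.cast : ℕ → R) (Nat.add_one_mul_choose_eq n k)
  push_cast at h
  calc _ = a ^ (k + 1) * b ^ (n - k) * (((n + 1).choose (k + 1) : R) * (k + 1)) := by ring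
    _ = _ := by rw [← h]; ring

namespace Complex

theorem im_I_pow_even (j : ℕ) : (I ^ (2 * j)).im = 0 := by
  rw [pow_mul, I_sq, ← ofReal_one, ← ofReal_neg, ← ofReal_pow, ofReal_im]

theorem im_I_pow_odd (j : ℕ) : (I ^ (2 * j + 1)).im = (-1) ^ j := by
  rw [pow_succ, pow_mul, I_sq, ← ofReal_one, ← ofReal_neg, ← ofReal_pow, im_ofReal_mul, I_im,
    mul_one]

end Complex

theorem sum_range_mul_im_I_pow (g : ℕ → ℝ) (N : ℕ) :
    ∑ k ∈ range N, g k * (I ^ k).im = ∑ i ∈ range (N / 2), (-1) ^ i * g (2 * i + 1) := by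
  induction N with
  | zero => simp
  | succ N ih =>
    rw [sum_range_succ, ih]
    obtain ⟨j, rfl | rfl⟩ := Nat.even_or_odd' N
    · rw [Complex.im_I_pow_even, mul_zero, add_zero, show (2 * j + 1) / 2 = 2 * j / 2 by omega]
    · rw [Complex.im_I_pow_odd, show (2 * j + 1 + 1) / 2 = (2 * j + 1) / 2 + 1 by omega,
        sum_range_succ, show (2 * j + 1) / 2 = j by omega, mul_comm]

theorem cos_add_sin_mul_I_pow_ofReal (n : ℕ) (θ : ℝ) :
    ((cos θ : ℂ) + sin θ * I) ^ n = (cos (n * θ) : ℂ) + (sin (n * θ) : ℂ) * I := by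
  push_cast
  exact Complex.cos_add_sin_mul_I_pow n θ

theorem sum_range_mul_choose_sin_pow_mul_cos_pow (d : ℕ) (θ : ℝ) :
    ∑ i ∈ range (d / 2 + 1),
        (-1) ^ i * (2 * i * (d + 1).choose (2 * i + 1) * sin θ ^ (2 * i + 1) * cos θ ^ (d - 2 * i)) =
      d * sin θ * cos (d * θ) - cos θ * sin (d * θ) := by
  set s := sin θ
  set c := cos θ
  let g : ℕ → ℝ := fun k => ((k : ℝ) - 1) * s ^ k * c ^ (d + 1 - k) * (d + 1).choose k
  have hodd_terms : ∑ k ∈ range (d + 2), g k * (I ^ k).im =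
      ∑ i ∈ range (d / 2 + 1),
        (-1) ^ i * (2 * i * (d + 1).choose (2 * i + 1) * s ^ (2 * i + 1) * c ^ (d - 2 * i)) := by
    rw [sum_range_mul_im_I_pow, show (d + 2) / 2 = d / 2 + 1 by omega]
    refine sum_congr rfl fun i _ => ?_
    simp only [g, Nat.add_sub_add_right]
    push_cast
    ring
  have hcomplex : ∑ k ∈ range (d + 2), g k * (I ^ k).im =
      (((d + 1) * (s * I) * (s * I + c) ^ d - (s * I + c) ^ (d + 1))).im := by
    rw [← sum_range_mul_pow_mul_pow_mul_choose, add_pow, ← sum_sub_distrib, Complex.im_sum]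
    refine sum_congr rfl fun k _ => ?_
    rw [← Complex.im_ofReal_mul]
    congr 1
    simp only [g]
    push_cast
    ring
  rw [← hodd_terms, hcomplex, add_comm (s * I), cos_add_sin_mul_I_pow_ofReal,
    cos_add_sin_mul_I_pow_ofReal]
  simp only [Nat.cast_add_one, add_one_mul, sin_add, Complex.ofReal_add, Complex.ofReal_mul,
    Complex.sub_im, Complex.add_im, Complex.mul_im, Complex.mul_re, Complex.add_re,
    Complex.natCast_re, Complex.natCast_im, Complex.ofReal_re, Complex.ofReal_im,
    Complex.I_re, Complex.I_im]
  ring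

theorem pow_three_mul_sum_Icc_eq_neg_sum_range (m d : ℕ) (s c : ℝ) :
    s ^ 3 * ∑ i ∈ Icc 1 m, (2 * i : ℝ) * ((d + 1).choose (2 * i + 1) : ℝ) * (-1 : ℝ) ^ (i - 1) *
        (s ^ 2) ^ (i - 1) * c ^ (d - 2 * i) =
      -∑ i ∈ range (m + 1),
        (-1) ^ i * (2 * i * (d + 1).choose (2 * i + 1) * s ^ (2 * i + 1) * c ^ (d - 2 * i)) := by
  rw [range_eq_Ico, sum_eq_sum_Ico_succ_bot m.succ_pos, zero_add, Nat.succ_eq_add_one,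
    Ico_add_one_right_eq_Icc, mul_sum]
  simp only [CharP.cast_eq_zero, mul_zero, zero_mul, zero_add, ← sum_neg_distrib]
  refine sum_congr rfl fun i hi => ?_
  obtain ⟨j, rfl⟩ : ∃ j, i = j + 1 := ⟨i - 1, by grind⟩
  rw [Nat.add_sub_cancel]
  ring

theorem hasDerivAt_sin_nat_mul_div_sin (d : ℕ) {θ : ℝ} (h : sin θ ≠ 0) :
    HasDerivAt (fun t => sin (d * t) / sin t)
      ((d * cos (d * θ) * sin θ - sin (d * θ) * cos θ) / sin θ ^ 2) θ := by
  have hsin_mul : HasDerivAt (fun t => sin (d * t)) (cos (d * θ) * d) θ := by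
    simpa using ((hasDerivAt_id θ).const_mul (d : ℝ)).sin
  exact (hsin_mul.fun_div (hasDerivAt_sin θ) h).congr_deriv (by ring)

theorem F_eq_polynomial_general (d : ℕ) (θ : ℝ) (hθ : θ ∈ Set.Ioo 0 π) :
    F d θ =
      (3 / ((d : ℝ) * ((d : ℝ) ^ 2 - 1))) *
        ∑ i ∈ Finset.Icc 1 (d / 2),
          (2 * i : ℝ) * ((d + 1).choose (2 * i + 1) : ℝ) * (-1 : ℝ) ^ (i - 1) *
            (Real.sin θ ^ 2) ^ (i - 1) * Real.cos θ ^ (d - 2 * i) := by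
  have hs : sin θ ≠ 0 := (sin_pos_of_pos_of_lt_pi hθ.1 hθ.2).ne'
  have hnumerator := pow_three_mul_sum_Icc_eq_neg_sum_range (d / 2) d (sin θ) (cos θ)
  rw [sum_range_mul_choose_sin_pow_mul_cos_pow] at hnumerator
  rw [F, (hasDerivAt_sin_nat_mul_div_sin d hs).deriv,
    eq_div_of_mul_eq (pow_ne_zero 3 hs) ((mul_comm _ _).trans hnumerator)]
  field_simp

/-- For d ≥ 2 and θ ∈ (0, π),
F_d(θ) = (3/(d(d²−1))) Σ_{i=1}^{⌊d/2⌋} 2i C(d+1, 2i+1) (−1)^{i−1} (sin²θ)^{i−1} (cos θ)^{d−2i};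
in particular F_d(θ) is a polynomial in cos θ and sin²θ. -/
theorem F_eq_polynomial (d : ℕ) (hd : 2 ≤ d) (θ : ℝ) (hθ : θ ∈ Set.Ioo 0 π) :
    F d θ =
      (3 / ((d : ℝ) * ((d : ℝ) ^ 2 - 1))) *
        ∑ i ∈ Finset.Icc 1 (d / 2),
          (2 * i : ℝ) * ((d + 1).choose (2 * i + 1) : ℝ) * (-1 : ℝ) ^ (i - 1) *
            (Real.sin θ ^ 2) ^ (i - 1) * Real.cos θ ^ (d - 2 * i) :=
  F_eq_polynomial_general d θ hθ
end

section
/- The equation z⁸ - 4z⁶ - 4z⁴ + 4z² + 6 + 4z⁻² - 4z⁻⁴ - 4z⁻⁶ + z⁻⁸ = 0 has at least one complex solution z with |z| > 1. -/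
/-!
Put `w = z²` and `u = w + w⁻¹`. The left-hand side is palindromic in `w`, and rewriting it in `u`
gives `(u² - 4u - 4)(u² - 4)`. The root `u = 2 + 2√2 > 2` of the first factor is attained by a real
`w > 1`, and `z = √w` is then a root of modulus greater than one.
-/

lemma char_eq_mul_of_ne_zero {K : Type*} [Field K] {z : K} (hz : z ≠ 0) :
    z ^ 8 - 4 * z ^ 6 - 4 * z ^ 4 + 4 * z ^ 2 + 6 + 4 * z⁻¹ ^ 2 - 4 * z⁻¹ ^ 4 -
        4 * z⁻¹ ^ 6 + z⁻¹ ^ 8 =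
      ((z ^ 2 + z⁻¹ ^ 2) ^ 2 - 4 * (z ^ 2 + z⁻¹ ^ 2) - 4) * ((z ^ 2 + z⁻¹ ^ 2) ^ 2 - 4) := by
  field_simp
  ring

lemma exists_one_lt_add_inv_eq {c : ℝ} (hc : 2 < c) : ∃ t : ℝ, 1 < t ∧ t + t⁻¹ = c := by
  have hd : 0 < c ^ 2 - 4 := by nlinarith
  set s := √(c ^ 2 - 4)
  have hs : s ^ 2 = c ^ 2 - 4 := Real.sq_sqrt hd.le
  have hs0 : 0 < s := Real.sqrt_pos.mpr hd
  refine ⟨(c + s) / 2, by linarith, ?_⟩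
  have hinv : ((c + s) / 2)⁻¹ = (c - s) / 2 :=
    inv_eq_of_mul_eq_one_right (by linear_combination (-1 / 4 : ℝ) * hs)
  rw [hinv]
  ring

/-- The characteristic equation of the d = 3 holonomy-regularized quantum constraint,
z⁸ − 4z⁶ − 4z⁴ + 4z² + 6 + 4z⁻² − 4z⁻⁴ − 4z⁻⁶ + z⁻⁸ = 0,
has a complex solution with modulus greater than one. -/
theorem exists_unstable_root :
    ∃ z : ℂ, z ≠ 0 ∧
      z ^ 8 - 4 * z ^ 6 - 4 * z ^ 4 + 4 * z ^ 2 + 6 + 4 * z⁻¹ ^ 2 - 4 * z⁻¹ ^ 4 -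
          4 * z⁻¹ ^ 6 + z⁻¹ ^ 8 = 0 ∧
        1 < ‖z‖ := by
  obtain ⟨t, ht, hsum⟩ := exists_one_lt_add_inv_eq (c := 2 + 2 * √2)
    (lt_add_of_pos_right _ (by positivity))
  have hsq : ((√t : ℝ) : ℂ) ^ 2 = t := by
    rw [← Complex.ofReal_pow, Real.sq_sqrt (by linarith)]
  have hz : ((√t : ℝ) : ℂ) ≠ 0 := by
    exact_mod_cast (Real.sqrt_pos.mpr (by linarith)).ne'
  refine ⟨√t, hz, ?_, ?_⟩
  · rw [char_eq_mul_of_ne_zero hz, inv_pow, hsq]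
    have hu : (t : ℂ) + (t : ℂ)⁻¹ = 2 + 2 * √2 := by
      exact_mod_cast congrArg Complex.ofReal hsum
    have hsqrt2 : ((√2 : ℝ) : ℂ) ^ 2 = 2 := by
      rw [← Complex.ofReal_pow, Real.sq_sqrt (by norm_num)]; norm_num
    rw [hu]
    refine mul_eq_zero_of_left ?_ _
    linear_combination 4 * hsqrt2
  · rw [Complex.norm_real, Real.norm_of_nonneg (Real.sqrt_nonneg _)]
    exact Real.lt_sqrt zero_le_one |>.mpr (by simpa using ht)
end
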